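/- arXiv:1611.00824 — 5 statements merged into one kernel-verified Lean document; each statement's English description precedes it below -/
import Mathlib

section
/- Let A be a local ring (not necessarily commutative) whose Jacobson radical r is nilpotent, and let V be a free right A-module of finite rank n > 0. Then every finite linearly independent list of vectors of V can be extended to a basis of V; in particular, any linearly independent list of n vectors of V is already a basis of V, and no linearly independent list of vectors of V has more than n vectors. -/
/-!
Extend the independent family one vector `v` at a time. If `b` is a basis containing the vectors
placed so far as `b j` for `j ∈ s`, write `v = ∑ b j c j`. Some `c j` with `j ∉ s` must be a
unit: otherwise a nonzero right annihilator `x` of all nonunits (a nonzero product of nonunits of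
maximal length, which exists since the nonunits are nilpotent) gives `v x = ∑_{j ∈ s} b j c j x`,
against independence. A unit coordinate lets `v` replace `b j` in the basis, via the
dilatransvection `u ↦ u + (b j)^*(u) • (v - b j)`.
-/

open Module Submodule Pointwise

section Annihilator

variable {M : Type*} [MonoidWithZero M] {S : Set M} {e : ℕ}

theorem Set.pow_subset_zero_of_forall_list_prod_eq_zero
    (h : ∀ l : List M, l.length = e → (∀ x ∈ l, x ∈ S) → l.prod = 0) : S ^ e ⊆ {0} := by
  intro a ha
  obtain ⟨f, rfl⟩ := Set.mem_pow.mp ha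
  exact h _ List.length_ofFn (by simp)

theorem exists_ne_zero_forall_mul_eq_zero_of_pow_subset_zero [Nontrivial M]
    (h : S ^ e ⊆ {0}) : ∃ x ≠ 0, ∀ s ∈ S, s * x = 0 := by
  induction e with
  | zero => simp at h
  | succ e ih =>
    by_cases he : S ^ e ⊆ {0}
    · exact ih he
    obtain ⟨x, hx, hx0⟩ := Set.not_subset.mp he
    refine ⟨x, hx0, fun s hs => h ?_⟩
    rw [pow_succ']
    exact Set.mul_mem_mul hs hx

end Annihilator

namespace Module.Basis

variable {ι R V : Type*} [Ring R] [AddCommGroup V] [Module R V] (b : Basis ι R V)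

theorem exists_update_eq [DecidableEq ι] {p : ι} {v : V} (h : IsUnit (b.repr v p)) :
    ∃ b' : Basis ι R V, ⇑b' = Function.update b p v := by
  have hunit : IsUnit (1 + b.coord p (v - b p)) := by simpa using h
  refine ⟨b.map (LinearEquiv.dilatransvection hunit), funext fun i => ?_⟩
  rcases eq_or_ne i p with rfl | hi
  · simp [LinearEquiv.dilatransvection.apply]
  · simp [LinearEquiv.dilatransvection.apply, hi]

theorem smul_mem_span_image_of_mul_repr_eq_zero {s : Set ι} {v : V} {x : R}
    (hx : ∀ j ∉ s, x * b.repr v j = 0) : x • v ∈ span R (b '' s) := by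
  rw [mem_span_image]
  intro j hj
  by_contra hjs
  simp [hx j hjs] at hj

theorem exists_notMem_isUnit_repr (hann : ∃ x ≠ (0 : R), ∀ r ∈ nonunits R, x * r = 0)
    {s : Set ι} {v : V} (hv : ∀ x : R, x • v ∈ span R (b '' s) → x = 0) :
    ∃ j ∉ s, IsUnit (b.repr v j) := by
  by_contra! hnon
  obtain ⟨x, hx0, hx⟩ := hann
  exact hx0 <| hv x <| b.smul_mem_span_image_of_mul_repr_eq_zero fun j hj => hx _ (hnon j hj)

end Module.Basis

theorem LinearIndependent.exists_basis_extending {ι R V : Type*} [Ring R] [AddCommGroup V]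
    [Module R V] (hann : ∃ x ≠ (0 : R), ∀ r ∈ nonunits R, x * r = 0) (b : Basis ι R V)
    {k : ℕ} {f : Fin k → V} (hf : LinearIndependent R f) :
    ∃ (σ : Fin k ↪ ι) (b' : Basis ι R V), ∀ i, b' (σ i) = f i := by
  classical
  induction k with
  | zero => exact ⟨⟨Fin.elim0, fun i => i.elim0⟩, b, fun i => i.elim0⟩
  | succ k ih =>
    obtain ⟨σ, b₁, hb₁⟩ := ih (hf.comp _ (Fin.succ_injective k))
    have hspan : b₁ '' Set.range σ = f '' (Set.univ \ {0}) := by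
      rw [← Set.range_comp, Set.sdiff_eq_compl_inter, Set.inter_univ, ← Fin.range_succ,
        ← Set.range_comp]
      exact congrArg Set.range (funext hb₁)
    obtain ⟨j, hjσ, hj⟩ := b₁.exists_notMem_isUnit_repr hann (s := Set.range σ) (v := f 0)
      fun x hx => hf.eq_zero_of_smul_mem_span 0 x (hspan ▸ hx)
    obtain ⟨b₂, hb₂⟩ := b₁.exists_update_eq hj
    refine ⟨⟨Fin.cons j σ, Fin.cons_injective_iff.mpr ⟨hjσ, σ.injective⟩⟩, b₂,
      Fin.cases (by simp [hb₂]) fun i => ?_⟩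
    have hij : σ i ≠ j := fun h => hjσ ⟨i, h⟩
    simp [hb₂, hij, hb₁]

theorem stmt0_general {A V : Type*} [Ring A] [IsLocalRing A]
    (hnil : ∃ e : ℕ, 0 < e ∧
      ∀ l : List A, l.length = e → (∀ x ∈ l, x ∈ nonunits A) → l.prod = 0)
    [AddCommGroup V] [Module Aᵐᵒᵖ V]
    {n : ℕ} (bV : Module.Basis (Fin n) Aᵐᵒᵖ V)
    {k : ℕ} (f : Fin k → V) (hf : LinearIndependent Aᵐᵒᵖ f) :
    ∃ (hk : k ≤ n) (b : Module.Basis (Fin n) Aᵐᵒᵖ V),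
      ∀ i : Fin k, b (Fin.castLE hk i) = f i := by
  obtain ⟨e, -, he⟩ := hnil
  obtain ⟨y, hy0, hy⟩ := exists_ne_zero_forall_mul_eq_zero_of_pow_subset_zero
    (Set.pow_subset_zero_of_forall_list_prod_eq_zero he)
  have hann : ∃ x ≠ (0 : Aᵐᵒᵖ), ∀ r ∈ nonunits Aᵐᵒᵖ, x * r = 0 :=
    ⟨MulOpposite.op y, by simpa using hy0, fun r hr => by
      simpa using congrArg MulOpposite.op (hy r.unop fun h => hr h.op)⟩
  obtain ⟨σ, b, hb⟩ := hf.exists_basis_extending hann bV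
  have hk : k ≤ n := by simpa using Fintype.card_le_of_embedding σ
  obtain ⟨π, hπ⟩ := Equiv.Perm.exists_extending_pair (Fin.castLE hk) σ
    (Fin.castLE_injective hk) σ.injective
  exact ⟨hk, b.reindex π.symm, fun i => by simp [hπ, hb]⟩

/-- Over a local ring (not necessarily commutative) with nilpotent Jacobson
radical (= the set of non-units), in a free right `A`-module of finite rank `n > 0`
(right modules are modules over `Aᵐᵒᵖ`), every finite linearly independent list of vectors
extends to a basis indexed by `Fin n`; in particular any independent list has length `≤ n`,
and an independent list of `n` vectors is itself a basis. -/
theorem stmt0 {A V : Type*} [Ring A] [IsLocalRing A]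
    (hnil : ∃ e : ℕ, 0 < e ∧
      ∀ l : List A, l.length = e → (∀ x ∈ l, x ∈ nonunits A) → l.prod = 0)
    [AddCommGroup V] [Module Aᵐᵒᵖ V]
    {n : ℕ} (hn : 0 < n) (bV : Module.Basis (Fin n) Aᵐᵒᵖ V)
    {k : ℕ} (f : Fin k → V) (hf : LinearIndependent Aᵐᵒᵖ f) :
    ∃ (hk : k ≤ n) (b : Module.Basis (Fin n) Aᵐᵒᵖ V),
      ∀ i : Fin k, b (Fin.castLE hk i) = f i :=
  stmt0_general hnil bV f hf
end

section
/- Let A be a local ring with involution * such that 2 is a unit of A and a − a* lies in the Jacobson radical r for every a ∈ A. Let J ∈ M_n(A) be an invertible skew-hermitian matrix (Jᴴ = −J). Then for every index i with 1 ≤ i ≤ n there exists an index j ≠ i such that the entry J_{ij} is a unit of A. -/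
open Matrix

namespace IsLocalRing

variable {R : Type*} [Ring R] [IsLocalRing R]

theorem eq_zero_or_one_of_isIdempotentElem {e : R} (he : IsIdempotentElem e) : e = 0 ∨ e = 1 := by
  rcases isUnit_or_isUnit_of_add_one (add_sub_cancel e 1) with h | h
  · exact Or.inr ((IsIdempotentElem.iff_eq_one_of_isUnit h).mp he)
  · exact Or.inl (sub_eq_self.mp ((IsIdempotentElem.iff_eq_one_of_isUnit h).mp he.one_sub))

/-- If `a * b = 1` then `b * a` is idempotent, hence `0` or `1`; it cannot be `0` since
`a = a * (b * a)`. -/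
instance : IsDedekindFiniteMonoid R where
  mul_eq_one_symm {a b} hab := by
    have hidem : IsIdempotentElem (b * a) := by
      rw [IsIdempotentElem, mul_assoc, ← mul_assoc a, hab, one_mul]
    refine (eq_zero_or_one_of_isIdempotentElem hidem).resolve_left fun hba => ?_
    have ha : a = 0 := by rw [← one_mul a, ← hab, mul_assoc, hba, mul_zero]
    simp [ha] at hab

end IsLocalRing

theorem Matrix.exists_isUnit_apply_of_isUnit {R n : Type*} [Ring R] [IsLocalRing R]
    [Fintype n] [DecidableEq n] {M : Matrix n n R} (hM : IsUnit M) (i : n) :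
    ∃ j, IsUnit (M i j) := by
  obtain ⟨U, rfl⟩ := hM
  have hrow : ∑ j, (U : Matrix n n R) i j * (↑U⁻¹ : Matrix n n R) j i = 1 := by
    rw [← Matrix.mul_apply, U.mul_inv, one_apply_eq]
  obtain ⟨j, -, hj⟩ := IsLocalRing.exists_of_isUnit_sum (hrow ▸ isUnit_one)
  exact ⟨j, isUnit_of_mul_isUnit_left hj⟩

theorem not_isUnit_of_star_eq_neg {A : Type*} [Ring A] [Star A] {a : A}
    (h2 : IsUnit (2 : A)) (hsk : a - star a ∈ nonunits A) (ha : star a = -a) : ¬IsUnit a :=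
  fun hu => hsk (by rw [ha, sub_neg_eq_add, ← two_mul]; exact h2.mul hu)

/-- Let `A` be a local ring (not necessarily commutative) with an involution `*`
(a `StarRing` structure) such that `2` is a unit and `a - a*` is a non-unit (i.e. lies in the
Jacobson radical) for every `a`.  If `J ∈ M_n(A)` is an invertible skew-hermitian matrix
(`Jᴴ = -J`), then for every row index `i` there is a column index `j ≠ i` such that the
entry `J i j` is a unit of `A`. -/
theorem stmt2 {A : Type*} [Ring A] [StarRing A] [IsLocalRing A]
    (h2 : IsUnit (2 : A)) (hsk : ∀ a : A, a - star a ∈ nonunits A)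
    {n : ℕ} (J : Matrix (Fin n) (Fin n) A) (hJ : IsUnit J) (hsh : Jᴴ = -J)
    (i : Fin n) :
    ∃ j : Fin n, j ≠ i ∧ IsUnit (J i j) := by
  have hdiag : ¬IsUnit (J i i) :=
    not_isUnit_of_star_eq_neg h2 (hsk _) (by simpa using congrFun₂ hsh i i)
  obtain ⟨j, hj⟩ := Matrix.exists_isUnit_apply_of_isUnit hJ i
  exact ⟨j, fun hji => hdiag (hji ▸ hj), hj⟩
end

section
/- Let A be a local ring with involution * such that 2 is a unit, a − a* lies in the Jacobson radical r for every a ∈ A, and r is nilpotent. Let J ∈ M_n(A) be an invertible skew-hermitian matrix, let I be a proper two-sided ideal of A, and let v ∈ A^n be a unimodular column vector whose length vᴴJv lies in I. Then there exists a unimodular vector z ∈ A^n such that z ≡ v coordinatewise modulo I and zᴴJz = 0. -/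
/-!
The length `a = zᴴJz` of any vector is skew (`a* = -a`). If `z` is unimodular, so is the row
`zᴴJ`, hence some `w` has `zᴴJw = 1`, and then `z - w (a/2)` has length `-(a/2) b (a/2)` with
`b = wᴴJw`. Since `b` is skew as well, `b = (b - b*)/2` lies in the radical. So this Newton step
moves `z` only by elements of `I` and multiplies its length on the left by an element of the
radical; after `e - 1` steps the length lies in `r^e = 0`.
-/

open Matrix MulOpposite Pointwise

namespace IsLocalRing

variable {A : Type*} [Ring A] [IsLocalRing A]

/-- If `x * y = 1` then `y * x` is idempotent, and the only idempotents of a local ring are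
`0` and `1`. -/
instance toIsDedekindFiniteMonoid : IsDedekindFiniteMonoid A where
  mul_eq_one_symm {x y} h := by
    have hidem : y * x * (y * x) = y * x * 1 := by
      rw [mul_assoc, ← mul_assoc x, h, one_mul, mul_one]
    rcases isUnit_or_isUnit_of_add_one (add_sub_cancel (y * x) 1) with hu | hu
    · exact hu.mul_left_cancel hidem
    · have hy : (1 - y * x) * y = (1 - y * x) * 0 := by
        rw [sub_mul, one_mul, mul_assoc, h, mul_one, sub_self, mul_zero]
      simp [hu.mul_left_cancel hy] at h

theorem isUnit_add_of_mem_nonunits {u m : A} (hu : IsUnit u) (hm : m ∈ nonunits A) :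
    IsUnit (u + m) := by
  by_contra h
  have hneg : -m ∈ nonunits A := fun h' => hm (by simpa using h'.neg)
  exact (by simpa using nonunits_add h hneg : u ∈ nonunits A) hu

end IsLocalRing

theorem TwoSidedIdeal.mem_nonunits_of_ne_top {A : Type*} [Ring A] {I : TwoSidedIdeal A}
    (hI : I ≠ ⊤) {x : A} (hx : x ∈ I) : x ∈ nonunits A := by
  rintro ⟨u, rfl⟩
  exact hI (I.eq_top (by simpa using I.mul_mem_left (↑u⁻¹) _ hx))

theorem mem_nonunits_of_star_eq_neg {A : Type*} [Ring A] [Star A] (h2 : IsUnit (2 : A)) {b : A}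
    (hb : star b = -b) (hsk : b - star b ∈ nonunits A) : b ∈ nonunits A := by
  rw [hb, sub_neg_eq_add, ← two_mul] at hsk
  exact fun hu => hsk (h2.mul hu)

theorem eq_zero_of_mem_pow_of_list_prod_eq_zero {M : Type*} [MonoidWithZero M] {s : Set M}
    {e : ℕ} (h : ∀ l : List M, l.length = e → (∀ x ∈ l, x ∈ s) → l.prod = 0) {x : M}
    (hx : x ∈ s ^ e) : x = 0 := by
  obtain ⟨f, rfl⟩ := Set.mem_pow.1 hx
  exact h _ List.length_ofFn (by simp [List.mem_ofFn])

section UnimodularVectors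

variable {A : Type*} [Ring A] {m k : Type*} [Fintype m] [Fintype k]

theorem exists_isUnit_vecMul_of_mul_eq_one [IsLocalRing A] [DecidableEq m]
    {M : Matrix m k A} {N : Matrix k m A} (hMN : M * N = 1) {x : m → A}
    (hx : ∃ i, IsUnit (x i)) : ∃ j, IsUnit ((x ᵥ* M) j) := by
  obtain ⟨i, hi⟩ := hx
  have hxi : x i = ∑ j, (x ᵥ* M) j * N j i := by
    conv_lhs => rw [← vecMul_one x, ← hMN, ← vecMul_vecMul]
    rfl
  obtain ⟨j, -, hj⟩ := IsLocalRing.exists_of_isUnit_sum (hxi ▸ hi)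
  exact ⟨j, isUnit_of_mul_isUnit_left hj⟩

theorem exists_dotProduct_eq_one {y : k → A} (hy : ∃ j, IsUnit (y j)) :
    ∃ w : k → A, y ⬝ᵥ w = 1 := by
  classical
  obtain ⟨j, hj⟩ := hy
  exact ⟨Pi.single j ↑hj.unit⁻¹, by rw [dotProduct_single, hj.mul_val_inv]⟩

end UnimodularVectors

section SkewHermitianForm

variable {A : Type*} [Ring A] [StarRing A] {n : Type*} [Fintype n] {J : Matrix n n A}

theorem exists_star_dotProduct_mulVec_eq_one [IsLocalRing A] [DecidableEq n] (hJ : IsUnit J)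
    {z : n → A} (hz : ∃ i, IsUnit (z i)) : ∃ w, star z ⬝ᵥ J *ᵥ w = 1 := by
  obtain ⟨u, rfl⟩ := hJ
  have hz' : ∃ i, IsUnit (star z i) := hz.imp fun _ hi => by simpa using hi.star
  simpa only [dotProduct_mulVec] using
    exists_dotProduct_eq_one (exists_isUnit_vecMul_of_mul_eq_one u.mul_inv hz')

theorem star_dotProduct_mulVec_of_conjTranspose_eq_neg (hJ : Jᴴ = -J) (x y : n → A) :
    star (star x ⬝ᵥ J *ᵥ y) = -(star y ⬝ᵥ J *ᵥ x) := by
  rw [star_dotProduct, star_star, star_mulVec, hJ, ← dotProduct_mulVec, neg_mulVec,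
    dotProduct_neg]

theorem dotProduct_mulVec_add_op_smul (J : Matrix n n A) (z w : n → A) (t : A) :
    star (z + op t • w) ⬝ᵥ J *ᵥ (z + op t • w) =
      star z ⬝ᵥ J *ᵥ z + (star z ⬝ᵥ J *ᵥ w) * t + star t * (star w ⬝ᵥ J *ᵥ z)
        + star t * (star w ⬝ᵥ J *ᵥ w) * t := by
  have hs : star (op t • w) = star t • star w := by
    ext i; simp
  rw [star_add, hs, mulVec_add, mulVec_smul]
  simp only [add_dotProduct, dotProduct_add, smul_dotProduct, dotProduct_smul, smul_eq_mul,
    op_smul_eq_mul, add_mul, mul_assoc]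
  abel

theorem dotProduct_mulVec_add_op_smul_of_star_eq_neg (hJ : Jᴴ = -J) {z w : n → A}
    (hw : star z ⬝ᵥ J *ᵥ w = 1) {t : A} (ht : star t = -t) :
    star (z + op t • w) ⬝ᵥ J *ᵥ (z + op t • w) =
      star z ⬝ᵥ J *ᵥ z + t + t - t * (star w ⬝ᵥ J *ᵥ w) * t := by
  have hwz : star w ⬝ᵥ J *ᵥ z = -1 := by
    rw [← neg_neg (star w ⬝ᵥ J *ᵥ z), ← star_dotProduct_mulVec_of_conjTranspose_eq_neg hJ, hw,
      star_one]
  rw [dotProduct_mulVec_add_op_smul, hw, hwz, ht]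
  noncomm_ring

theorem exists_sub_mem_and_dotProduct_mulVec_eq_mul [IsLocalRing A] [DecidableEq n]
    (h2 : IsUnit (2 : A)) (hsk : ∀ a : A, a - star a ∈ nonunits A) (hJ : IsUnit J) (hsh : Jᴴ = -J)
    (I : TwoSidedIdeal A) {z : n → A} (hz : ∃ i, IsUnit (z i))
    (ha : star z ⬝ᵥ J *ᵥ z ∈ I) :
    ∃ z' : n → A, (∀ i, z' i - z i ∈ I) ∧
      ∃ x ∈ nonunits A, star z' ⬝ᵥ J *ᵥ z' = x * (star z ⬝ᵥ J *ᵥ z) := by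
  let := h2.invertible
  set a := star z ⬝ᵥ J *ᵥ z
  obtain ⟨w, hw⟩ := exists_star_dotProduct_mulVec_eq_one hJ hz
  set b := star w ⬝ᵥ J *ᵥ w with hb_def
  have hb : b ∈ nonunits A :=
    mem_nonunits_of_star_eq_neg h2 (star_dotProduct_mulVec_of_conjTranspose_eq_neg hsh w w)
      (hsk b)
  have hhalf : ⅟2 * a = a * ⅟2 := ((Commute.ofNat_right a 2).invOf_right).symm.eq
  have hstar : star (-(⅟2 * a)) = -(-(⅟2 * a)) := by
    have hstar2 : star (⅟2 : A) = ⅟2 := by simp [star_invOf]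
    rw [star_neg, star_mul, star_dotProduct_mulVec_of_conjTranspose_eq_neg hsh z z, hstar2,
      neg_mul, hhalf]
  have hsum : a + -(⅟2 * a) + -(⅟2 * a) = 0 := by
    rw [add_assoc, ← neg_add, ← add_mul, invOf_two_add_invOf_two, one_mul, add_neg_cancel]
  refine ⟨z + op (-(⅟2 * a)) • w, fun i => ?_, -(⅟2 * a * b * ⅟2), ?_, ?_⟩
  · simpa using I.mul_mem_left (w i) _ (I.neg_mem (I.mul_mem_left ⅟2 a ha))
  · intro hu
    simp only [IsUnit.neg_iff, IsUnit.mul_iff] at hu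
    exact hb hu.1.2
  · rw [dotProduct_mulVec_add_op_smul_of_star_eq_neg hsh hw hstar, hsum, ← hb_def]
    noncomm_ring

end SkewHermitianForm

/-- Let `A` be a local ring with involution `*` such that `2` is a unit,
`a - a*` is a non-unit (lies in the Jacobson radical) for every `a`, and the Jacobson
radical (= the set of non-units) is nilpotent.  Let `J ∈ M_n(A)` be an invertible
skew-hermitian matrix, `I` a proper two-sided ideal of `A`, and `v ∈ Aⁿ` a unimodular
column vector whose length `vᴴJv = star v ⬝ᵥ J.mulVec v` lies in `I`.  Then there is a
unimodular vector `z` with `z ≡ v` coordinatewise mod `I` and `zᴴJz = 0`. -/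
theorem stmt3 {A : Type*} [Ring A] [StarRing A] [IsLocalRing A]
    (h2 : IsUnit (2 : A)) (hsk : ∀ a : A, a - star a ∈ nonunits A)
    (hnil : ∃ e : ℕ, 0 < e ∧
      ∀ l : List A, l.length = e → (∀ x ∈ l, x ∈ nonunits A) → l.prod = 0)
    {n : ℕ} (J : Matrix (Fin n) (Fin n) A) (hJ : IsUnit J) (hsh : Jᴴ = -J)
    (I : TwoSidedIdeal A) (hI : I ≠ ⊤)
    (v : Fin n → A) (hv : ∃ i, IsUnit (v i))
    (hlen : star v ⬝ᵥ J.mulVec v ∈ I) :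
    ∃ z : Fin n → A, (∃ i, IsUnit (z i)) ∧ (∀ i, z i - v i ∈ I) ∧
      star z ⬝ᵥ J.mulVec z = 0 := by
  have hunimod : ∀ z : Fin n → A, (∀ i, z i - v i ∈ I) → ∃ i, IsUnit (z i) := fun z hzv =>
    hv.imp fun i hi => by
      simpa using IsLocalRing.isUnit_add_of_mem_nonunits hi (I.mem_nonunits_of_ne_top hI (hzv i))
  have hiter : ∀ m : ℕ, ∃ z : Fin n → A, (∀ i, z i - v i ∈ I) ∧
      star z ⬝ᵥ J *ᵥ z ∈ I ∧ star z ⬝ᵥ J *ᵥ z ∈ nonunits A ^ (m + 1) := by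
    intro m
    induction m with
    | zero => exact ⟨v, by simp, hlen, by simpa using I.mem_nonunits_of_ne_top hI hlen⟩
    | succ m ih =>
      obtain ⟨z, hzv, hzI, hzpow⟩ := ih
      obtain ⟨z', hz'z, x, hx, hz'⟩ :=
        exists_sub_mem_and_dotProduct_mulVec_eq_mul h2 hsk hJ hsh I (hunimod z hzv) hzI
      refine ⟨z', fun i => by simpa using I.add_mem (hz'z i) (hzv i), ?_, ?_⟩
      · exact hz' ▸ I.mul_mem_left x _ hzI
      · rw [hz', pow_succ']
        exact Set.mul_mem_mul hx hzpow
  obtain ⟨e, he, hnil⟩ := hnil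
  obtain ⟨z, hzv, -, hzpow⟩ := hiter (e - 1)
  rw [Nat.sub_add_cancel he] at hzpow
  exact ⟨z, hunimod z hzv, hzv, eq_zero_of_mem_pow_of_list_prod_eq_zero hnil hzpow⟩
end

section
/- Let A be a local ring with involution * such that 2 is a unit, a − a* lies in the Jacobson radical r for every a ∈ A, and r is nilpotent. Let m ≥ 1 and let u, v ∈ A^{2m} be unimodular column vectors with equal lengths uᴴJ₀u = vᴴJ₀v. Then there exists a matrix X ∈ M_{2m}(A) with XᴴJ₀X = J₀ such that X·u = v. In other words, the unitary group U_{2m}(A) acts transitively on unimodular vectors of a given length. -/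
open Matrix

/-- The standard symplectic matrix `J₀ ∈ M_{2m}(A)`: the 2×2 block matrix
`[[0, I_m], [-I_m, 0]]` with `m × m` blocks. -/
def stdSymplectic (A : Type*) [Ring A] (m : ℕ) : Matrix (Fin (2 * m)) (Fin (2 * m)) A :=
  Matrix.of fun i j =>
    if (i : ℕ) + m = (j : ℕ) then (1 : A)
    else if (j : ℕ) + m = (i : ℕ) then (-1 : A) else 0

/-!
After reindexing, `J₀` is the hyperbolic matrix `[[0, 1], [-1, 0]]` on `Aᵐ ⊕ Aᵐ`, whose
length `(a, b) ↦ aᴴb - bᴴa` is skew. A unimodular vector `u` is moved by isometries to the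
normal form `(e_z, h e_z)`, for any `h` with `h - h* = uᴴJ₀u`: `J₀` itself puts a unit
coordinate into the first block, `diag(g, (g⁻¹)ᴴ)` with `g ∈ GLₘ(A)` turns the first block
into `e_z`, and a shear `[[1, 0], [c, 1]]` with `c` hermitian corrects the second block, the
length equation being exactly what makes the required `c` hermitian. As `2` is a unit,
`h = ½ uᴴJ₀u` works, so the normal form depends only on the length.
-/

theorem exists_sub_star_eq_of_star_eq_neg {A : Type*} [Ring A] [StarRing A]
    (h2 : IsUnit (2 : A)) {a : A} (ha : star a = -a) : ∃ h : A, h - star h = a := by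
  let := h2.invertible
  have hstar : star (⅟2 : A) = ⅟2 := by
    have h := congrArg star (mul_invOf_self (2 : A))
    rw [star_mul, star_one, star_ofNat] at h
    exact (invOf_eq_left_inv h).symm
  refine ⟨⅟2 * a, ?_⟩
  rw [star_mul, hstar, ha, neg_mul, sub_neg_eq_add, ← ((Commute.ofNat_left 2 a).invOf_left).eq,
    ← add_mul, invOf_two_add_invOf_two, one_mul]

namespace Matrix

section Ring

variable {n A : Type*} [Fintype n] [DecidableEq n] [Ring A]

theorem one_add_vecMulVec_mul_one_add_vecMulVec (a b c : n → A) :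
    (1 + vecMulVec a b) * (1 + vecMulVec a c) = 1 + vecMulVec a (b + c + (b ⬝ᵥ a) • c) := by
  simp only [Matrix.add_mul, Matrix.mul_add, Matrix.one_mul, Matrix.mul_one,
    vecMulVec_mul_vecMulVec, vecMulVec_add]
  abel

theorem exists_unit_mulVec_eq_single_of_isUnit_self {x : n → A} {z : n} (hx : IsUnit (x z)) :
    ∃ g : (Matrix n n A)ˣ, ↑g *ᵥ x = Pi.single z 1 := by
  obtain ⟨r, hr⟩ := hx
  -- `1 + vecMulVec a (Pi.single z 1)` is the identity with its `z`-th column replaced by `x`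
  set a := x - Pi.single z 1
  have ha : a z = r - 1 := by simp [a, hr]
  have inverse : ∀ s t : A, s + t + s * (r - 1) * t = 0 →
      (1 + vecMulVec a (Pi.single z s)) * (1 + vecMulVec a (Pi.single z t)) = 1 := by
    intro s t hst
    rw [one_add_vecMulVec_mul_one_add_vecMulVec, single_dotProduct, ha, ← Pi.single_smul,
      smul_eq_mul, ← Pi.single_add, ← Pi.single_add, hst, Pi.single_zero, vecMulVec_zero,
      add_zero]
  refine ⟨⟨1 + vecMulVec a (Pi.single z (-↑r⁻¹)), 1 + vecMulVec a (Pi.single z 1),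
    inverse _ _ ?_, inverse _ _ ?_⟩, ?_⟩
  · rw [mul_one, neg_mul, mul_sub, Units.inv_mul, mul_one]; abel
  · rw [one_mul, mul_neg, sub_mul, Units.mul_inv, one_mul]; abel
  · rw [Units.val_mk, add_mulVec, one_mulVec, vecMulVec_mulVec, single_dotProduct, ← hr,
      neg_mul, Units.inv_mul]
    ext j
    simp [a]

theorem exists_unit_mulVec_eq_single {x : n → A} {i : n} (hx : IsUnit (x i)) (z : n) :
    ∃ g : (Matrix n n A)ˣ, ↑g *ᵥ x = Pi.single z 1 := by
  let s : (Matrix n n A)ˣ := ⟨swap A i z, swap A i z, swap_mul_self i z, swap_mul_self i z⟩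
  have hs : (↑s *ᵥ x) z = x i := by simp [s, swap_mulVec]
  obtain ⟨g, hg⟩ := exists_unit_mulVec_eq_single_of_isUnit_self (hs ▸ hx)
  exact ⟨g * s, by rw [Units.val_mul, ← mulVec_mulVec, hg]⟩

end Ring

section Isometry

variable {n A : Type*} [Fintype n] [DecidableEq n] [Ring A] [StarRing A]

def isometryGroup (J : Matrix n n A) : Subgroup (Matrix n n A)ˣ where
  carrier := {X | (X : Matrix n n A)ᴴ * J * X = J}
  one_mem' := by simp
  mul_mem' {X Y} hX hY := by
    simp only [Set.mem_ofPred_eq, Units.val_mul, conjTranspose_mul] at *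
    calc (Y : Matrix n n A)ᴴ * (X : Matrix n n A)ᴴ * J * (X * Y)
        = (Y : Matrix n n A)ᴴ * ((X : Matrix n n A)ᴴ * J * X) * Y := by
          simp only [Matrix.mul_assoc]
      _ = J := by rw [hX, hY]
  inv_mem' {X} hX := by
    simp only [Set.mem_ofPred_eq] at *
    calc (↑X⁻¹ : Matrix n n A)ᴴ * J * ↑X⁻¹
        = (↑X⁻¹ : Matrix n n A)ᴴ * ((X : Matrix n n A)ᴴ * J * X) * ↑X⁻¹ := by rw [hX]
      _ = (↑X * ↑X⁻¹ : Matrix n n A)ᴴ * J * (↑X * ↑X⁻¹) := by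
          simp only [conjTranspose_mul, Matrix.mul_assoc]
      _ = J := by simp

theorem mem_isometryGroup_iff {J : Matrix n n A} {X : (Matrix n n A)ˣ} :
    X ∈ isometryGroup J ↔ (X : Matrix n n A)ᴴ * J * X = J := Iff.rfl

theorem form_mulVec_of_mem_isometryGroup {J : Matrix n n A} {X : (Matrix n n A)ˣ}
    (hX : X ∈ isometryGroup J) (u : n → A) :
    star (↑X *ᵥ u) ⬝ᵥ J *ᵥ (↑X *ᵥ u) = star u ⬝ᵥ J *ᵥ u := by
  rw [star_mulVec, dotProduct_mulVec, vecMul_vecMul, dotProduct_mulVec, vecMul_vecMul,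
    mem_isometryGroup_iff.mp hX, ← dotProduct_mulVec]

theorem exists_isHermitian_mulVec_single {d : n → A} {z : n} (hd : star (d z) = d z) :
    ∃ c : Matrix n n A, c.IsHermitian ∧ c *ᵥ Pi.single z 1 = d := by
  refine ⟨of fun j k => if k = z then d j else if j = z then star (d k) else 0, ?_, ?_⟩
  · ext j k
    by_cases hj : j = z <;> by_cases hk : k = z <;> simp [hj, hk, hd]
  · ext j
    simp [mulVec_single]

end Isometry

section Hyperbolic

variable {n A : Type*} [DecidableEq n] [Ring A]

variable (n A) in
def hyperbolic : Matrix (n ⊕ n) (n ⊕ n) A :=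
  fromBlocks 0 1 (-1) 0

theorem hyperbolic_mul_self [Fintype n] : hyperbolic n A * hyperbolic n A = -1 := by
  simp [hyperbolic, fromBlocks_multiply, ← fromBlocks_one, fromBlocks_neg]

theorem hyperbolic_mulVec_sumElim [Fintype n] (a b : n → A) :
    hyperbolic n A *ᵥ Sum.elim a b = Sum.elim b (-a) := by
  simp [hyperbolic, fromBlocks_mulVec, neg_mulVec]

variable [StarRing A]

theorem conjTranspose_hyperbolic : (hyperbolic n A)ᴴ = -hyperbolic n A := by
  simp [hyperbolic, fromBlocks_conjTranspose, fromBlocks_neg]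

variable [Fintype n]

theorem form_hyperbolic_sumElim (a b : n → A) :
    star (Sum.elim a b) ⬝ᵥ hyperbolic n A *ᵥ Sum.elim a b = star a ⬝ᵥ b - star b ⬝ᵥ a := by
  rw [Function.star_sumElim, hyperbolic_mulVec_sumElim, sumElim_dotProduct_sumElim,
    dotProduct_neg, sub_eq_add_neg]

theorem star_form_hyperbolic (u : n ⊕ n → A) :
    star (star u ⬝ᵥ hyperbolic n A *ᵥ u) = -(star u ⬝ᵥ hyperbolic n A *ᵥ u) := by
  rw [← Sum.elim_comp_inl_inr u, form_hyperbolic_sumElim, star_sub, star_dotProduct,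
    star_dotProduct, star_star, star_star, neg_sub]

def hyperbolicUnit : (Matrix (n ⊕ n) (n ⊕ n) A)ˣ where
  val := hyperbolic n A
  inv := -hyperbolic n A
  val_inv := by rw [Matrix.mul_neg, hyperbolic_mul_self, neg_neg]
  inv_val := by rw [Matrix.neg_mul, hyperbolic_mul_self, neg_neg]

theorem hyperbolicUnit_mem_isometryGroup :
    hyperbolicUnit ∈ isometryGroup (hyperbolic n A) := by
  rw [mem_isometryGroup_iff]
  simp [hyperbolicUnit, conjTranspose_hyperbolic, hyperbolic_mul_self]

def blockDiagUnit (g : (Matrix n n A)ˣ) : (Matrix (n ⊕ n) (n ⊕ n) A)ˣ where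
  val := fromBlocks g 0 0 (↑g⁻¹)ᴴ
  inv := fromBlocks ↑g⁻¹ 0 0 (↑g)ᴴ
  val_inv := by simp [fromBlocks_multiply, ← conjTranspose_mul, ← fromBlocks_one]
  inv_val := by simp [fromBlocks_multiply, ← conjTranspose_mul, ← fromBlocks_one]

theorem blockDiagUnit_mem_isometryGroup (g : (Matrix n n A)ˣ) :
    blockDiagUnit g ∈ isometryGroup (hyperbolic n A) := by
  rw [mem_isometryGroup_iff]
  simp [blockDiagUnit, hyperbolic, fromBlocks_conjTranspose, fromBlocks_multiply,
    ← conjTranspose_mul]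

def shearUnit (c : Matrix n n A) : (Matrix (n ⊕ n) (n ⊕ n) A)ˣ where
  val := fromBlocks 1 0 c 1
  inv := fromBlocks 1 0 (-c) 1
  val_inv := by simp [fromBlocks_multiply, ← fromBlocks_one]
  inv_val := by simp [fromBlocks_multiply, ← fromBlocks_one]

theorem shearUnit_mem_isometryGroup {c : Matrix n n A} (hc : c.IsHermitian) :
    shearUnit c ∈ isometryGroup (hyperbolic n A) := by
  rw [mem_isometryGroup_iff]
  simp [shearUnit, hyperbolic, fromBlocks_conjTranspose, fromBlocks_multiply, hc.eq]

theorem exists_hyperbolic_isometry_mulVec_eq_elim_single_of_isUnit_inl {u : n ⊕ n → A} {i : n}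
    (hu : IsUnit (u (.inl i))) (z : n) {h : A}
    (hh : h - star h = star u ⬝ᵥ hyperbolic n A *ᵥ u) :
    ∃ X ∈ isometryGroup (hyperbolic n A),
      ↑X *ᵥ u = Sum.elim (Pi.single z 1) (Pi.single z h) := by
  obtain ⟨g, hg⟩ := exists_unit_mulVec_eq_single (x := u ∘ Sum.inl) hu z
  set y := (↑g⁻¹ : Matrix n n A)ᴴ *ᵥ (u ∘ Sum.inr)
  have hgu : ↑(blockDiagUnit g) *ᵥ u = Sum.elim (Pi.single z 1) y := by
    rw [← Sum.elim_comp_inl_inr u]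
    simp [blockDiagUnit, fromBlocks_mulVec, hg, y]
  have hy : y z - star (y z) = star u ⬝ᵥ hyperbolic n A *ᵥ u := by
    rw [← form_mulVec_of_mem_isometryGroup (blockDiagUnit_mem_isometryGroup g), hgu,
      form_hyperbolic_sumElim]
    simp [single_dotProduct, dotProduct_single]
  obtain ⟨c, hc, hcz⟩ := exists_isHermitian_mulVec_single (d := Pi.single z h - y) (z := z)
    (by simpa using (sub_eq_sub_iff_sub_eq_sub.mp (hh.trans hy.symm)).symm)
  refine ⟨shearUnit c * blockDiagUnit g,
    mul_mem (shearUnit_mem_isometryGroup hc) (blockDiagUnit_mem_isometryGroup g), ?_⟩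
  rw [Units.val_mul, ← mulVec_mulVec, hgu]
  simp only [shearUnit, fromBlocks_mulVec, Sum.elim_comp_inl, Sum.elim_comp_inr, one_mulVec,
    zero_mulVec, add_zero, hcz, sub_add_cancel]

theorem exists_hyperbolic_isometry_mulVec_eq_elim_single {u : n ⊕ n → A}
    (hu : ∃ i, IsUnit (u i)) (z : n)
    {h : A} (hh : h - star h = star u ⬝ᵥ hyperbolic n A *ᵥ u) :
    ∃ X ∈ isometryGroup (hyperbolic n A),
      ↑X *ᵥ u = Sum.elim (Pi.single z 1) (Pi.single z h) := by
  obtain ⟨i | i, hi⟩ := hu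
  · exact exists_hyperbolic_isometry_mulVec_eq_elim_single_of_isUnit_inl hi z hh
  · have hJu : IsUnit ((hyperbolicUnit.val *ᵥ u) (Sum.inl i)) := by
      rwa [show hyperbolicUnit.val = hyperbolic n A from rfl, ← Sum.elim_comp_inl_inr u,
        hyperbolic_mulVec_sumElim, Sum.elim_inl]
    rw [← form_mulVec_of_mem_isometryGroup hyperbolicUnit_mem_isometryGroup] at hh
    obtain ⟨X, hX, hXu⟩ :=
      exists_hyperbolic_isometry_mulVec_eq_elim_single_of_isUnit_inl hJu z hh
    exact ⟨X * hyperbolicUnit, mul_mem hX hyperbolicUnit_mem_isometryGroup,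
      by rw [Units.val_mul, ← mulVec_mulVec, hXu]⟩

theorem exists_hyperbolic_isometry_mulVec_eq [Nonempty n] (h2 : IsUnit (2 : A))
    {u v : n ⊕ n → A} (hu : ∃ i, IsUnit (u i)) (hv : ∃ i, IsUnit (v i))
    (hlen : star u ⬝ᵥ hyperbolic n A *ᵥ u = star v ⬝ᵥ hyperbolic n A *ᵥ v) :
    ∃ X ∈ isometryGroup (hyperbolic n A), ↑X *ᵥ u = v := by
  obtain ⟨h, hh⟩ := exists_sub_star_eq_of_star_eq_neg h2 (star_form_hyperbolic u)
  let z : n := Classical.arbitrary n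
  obtain ⟨Xu, hXu, hXuu⟩ := exists_hyperbolic_isometry_mulVec_eq_elim_single hu z hh
  obtain ⟨Xv, hXv, hXvv⟩ := exists_hyperbolic_isometry_mulVec_eq_elim_single hv z (hh.trans hlen)
  refine ⟨Xv⁻¹ * Xu, mul_mem (inv_mem hXv) hXu, ?_⟩
  rw [Units.val_mul, ← mulVec_mulVec, hXuu, ← hXvv, mulVec_mulVec, Units.inv_mul, one_mulVec]

end Hyperbolic

section Reindex

variable {m n A : Type*} [Fintype m] [Fintype n] [Ring A] [StarRing A]

theorem conjTranspose_mul_mul_submatrix_equiv (X J : Matrix n n A) (e : m ≃ n) :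
    (X.submatrix e e)ᴴ * J.submatrix e e * X.submatrix e e = (Xᴴ * J * X).submatrix e e := by
  rw [conjTranspose_submatrix, submatrix_mul_equiv, submatrix_mul_equiv]

theorem form_submatrix_equiv (J : Matrix n n A) (e : m ≃ n) (u : m → A) :
    star u ⬝ᵥ J.submatrix e e *ᵥ u = star (u ∘ e.symm) ⬝ᵥ J *ᵥ (u ∘ e.symm) := by
  rw [submatrix_mulVec_equiv, ← comp_equiv_symm_dotProduct]
  rfl

end Reindex

end Matrix

theorem exists_stdSymplectic_eq_submatrix (A : Type*) [Ring A] (m : ℕ) :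
    ∃ σ : Fin (2 * m) ≃ Fin m ⊕ Fin m,
      stdSymplectic A m = (hyperbolic (Fin m) A).submatrix σ σ := by
  let σ : Fin (2 * m) ≃ Fin m ⊕ Fin m := (finCongr (two_mul m)).trans finSumFinEquiv.symm
  refine ⟨σ, ?_⟩
  ext i j
  obtain ⟨a, rfl⟩ := σ.symm.surjective i
  obtain ⟨b, rfl⟩ := σ.symm.surjective j
  simp only [submatrix_apply, Equiv.apply_symm_apply]
  rcases a with a | a <;> rcases b with b | b <;>
    simp [σ, stdSymplectic, hyperbolic, one_apply, Fin.ext_iff] <;>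
    split_ifs <;> first | omega | simp

theorem stmt7_general {A : Type*} [Ring A] [StarRing A]
    (h2 : IsUnit (2 : A))
    {m : ℕ} (hm : 1 ≤ m)
    (u v : Fin (2 * m) → A)
    (hu : ∃ i, IsUnit (u i)) (hv : ∃ i, IsUnit (v i))
    (hlen : star u ⬝ᵥ (stdSymplectic A m).mulVec u = star v ⬝ᵥ (stdSymplectic A m).mulVec v) :
    ∃ X : Matrix (Fin (2 * m)) (Fin (2 * m)) A,
      Xᴴ * stdSymplectic A m * X = stdSymplectic A m ∧ X.mulVec u = v := by
  obtain ⟨σ, hσ⟩ := exists_stdSymplectic_eq_submatrix A m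
  have : Nonempty (Fin m) := ⟨⟨0, hm⟩⟩
  rw [hσ, form_submatrix_equiv, form_submatrix_equiv] at hlen
  obtain ⟨X, hX, hXu⟩ := exists_hyperbolic_isometry_mulVec_eq h2
    (u := u ∘ σ.symm) (v := v ∘ σ.symm) (hu.imp' σ fun i hi => by simpa using hi)
    (hv.imp' σ fun i hi => by simpa using hi) hlen
  refine ⟨(X : Matrix _ _ A).submatrix σ σ, ?_, ?_⟩
  · rw [hσ, conjTranspose_mul_mul_submatrix_equiv, mem_isometryGroup_iff.mp hX]
  · rw [submatrix_mulVec_equiv, hXu]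
    ext i
    simp

/-- Let `A` be a local ring with involution `*` such that `2` is a unit,
`a - a*` is a non-unit for every `a`, and the Jacobson radical (= set of non-units) is
nilpotent.  Let `m ≥ 1` and let `u, v ∈ A^{2m}` be unimodular column vectors with the same
length `uᴴJ₀u = vᴴJ₀v`.  Then some element `X` of the unitary group `U_{2m}(A)`
(i.e. `XᴴJ₀X = J₀`) satisfies `X·u = v`: the unitary group acts transitively on unimodular
vectors of a given length. -/
theorem stmt7 {A : Type*} [Ring A] [StarRing A] [IsLocalRing A]
    (h2 : IsUnit (2 : A)) (hsk : ∀ a : A, a - star a ∈ nonunits A)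
    (hnil : ∃ e : ℕ, 0 < e ∧
      ∀ l : List A, l.length = e → (∀ x ∈ l, x ∈ nonunits A) → l.prod = 0)
    {m : ℕ} (hm : 1 ≤ m)
    (u v : Fin (2 * m) → A)
    (hu : ∃ i, IsUnit (u i)) (hv : ∃ i, IsUnit (v i))
    (hlen : star u ⬝ᵥ (stdSymplectic A m).mulVec u = star v ⬝ᵥ (stdSymplectic A m).mulVec v) :
    ∃ X : Matrix (Fin (2 * m)) (Fin (2 * m)) A,
      Xᴴ * stdSymplectic A m * X = stdSymplectic A m ∧ X.mulVec u = v :=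
  stmt7_general h2 hm u v hu hv hlen
end

section
/- Let A be a finite local ring with involution * such that 2 is a unit and a − a* lies in the Jacobson radical r for every a ∈ A. Let I be a *-invariant two-sided ideal of A with I² = 0, and let m ≥ 1. Then the kernel of the reduction homomorphism U_{2m}(A) → U_{2m}(A/I), namely the set of matrices X ∈ M_{2m}(A) with XᴴJ₀X = J₀ and all entries of X − 1 lying in I, has cardinality |I|^{2m²−m} · |I ∩ 𝔪|^{2m}, where 𝔪 = {a ∈ r : a* = a}. -/
/-!
Write `X = 1 + Y` with `Y` entrywise in `I`. Since `I² = 0` kills the quadratic term, the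
condition `XᴴJ₀X = J₀` becomes linear, namely that `J₀Y` is Hermitian; as `J₀² = -1`, the map
`X ↦ J₀(X - 1)` is then a bijection onto the Hermitian matrices with entries in `I`. These are
freely determined by a strict upper triangle in `I` and a diagonal of self-adjoint elements of
`I`, and those lie in `r` automatically because `I ≠ A`.
-/

open Matrix

section Symplectic

variable {A : Type*} [Ring A] (m : ℕ)

def finSumSelfEquivTwoMul : Fin m ⊕ Fin m ≃ Fin (2 * m) :=
  finSumFinEquiv.trans (finCongr (two_mul m).symm)

theorem stdSymplectic_eq_reindex_fromBlocks :
    stdSymplectic A m = reindexRingEquiv A (finSumSelfEquivTwoMul m) (fromBlocks 0 1 (-1) 0) := by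
  ext i j
  obtain ⟨a, rfl⟩ := (finSumSelfEquivTwoMul m).surjective i
  obtain ⟨b, rfl⟩ := (finSumSelfEquivTwoMul m).surjective j
  rw [coe_reindexRingEquiv, reindex_apply, submatrix_apply, Equiv.symm_apply_apply,
    Equiv.symm_apply_apply]
  rcases a with a | a <;> rcases b with b | b <;>
    simp [stdSymplectic, finSumSelfEquivTwoMul, one_apply, Fin.ext_iff] <;> grind

theorem stdSymplectic_mul_self : stdSymplectic A m * stdSymplectic A m = -1 := by
  have hblocks : (fromBlocks 0 1 (-1) 0 : Matrix (Fin m ⊕ Fin m) (Fin m ⊕ Fin m) A) *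
      fromBlocks 0 1 (-1) 0 = -1 := by
    simp [fromBlocks_multiply, ← fromBlocks_one, fromBlocks_neg]
  rw [stdSymplectic_eq_reindex_fromBlocks, ← map_mul, hblocks, map_neg, map_one]

theorem conjTranspose_stdSymplectic [StarRing A] :
    (stdSymplectic A m)ᴴ = -stdSymplectic A m := by
  have hblocks : (fromBlocks 0 1 (-1) 0 : Matrix (Fin m ⊕ Fin m) (Fin m ⊕ Fin m) A)ᴴ =
      -fromBlocks 0 1 (-1) 0 := by
    simp [fromBlocks_conjTranspose, fromBlocks_neg]
  rw [stdSymplectic_eq_reindex_fromBlocks, coe_reindexRingEquiv, conjTranspose_reindex, hblocks,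
    ← coe_reindexRingEquiv, map_neg]

end Symplectic

namespace TwoSidedIdeal

variable {R : Type*} [Ring R] {I : TwoSidedIdeal R} {n : Type*} [Fintype n]

theorem mul_eq_zero_of_mem_matrix (hI2 : ∀ a ∈ I, ∀ b ∈ I, a * b = 0) {P Q : Matrix n n R}
    (hP : P ∈ I.matrix n) (hQ : Q ∈ I.matrix n) : P * Q = 0 := by
  ext i j
  exact Finset.sum_eq_zero fun k _ => hI2 _ (hP i k) _ (hQ k j)

theorem conjTranspose_mem_matrix [StarRing R] (hIstar : ∀ a ∈ I, star a ∈ I)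
    {P : Matrix n n R} (hP : P ∈ I.matrix n) : Pᴴ ∈ I.matrix n :=
  fun i j => hIstar _ (hP j i)

theorem mem_nonunits_of_forall_mul_eq_zero [Nontrivial R]
    (hI2 : ∀ a ∈ I, ∀ b ∈ I, a * b = 0) {a : R} (ha : a ∈ I) : a ∈ nonunits R := by
  rintro ⟨u, rfl⟩
  have h1 : (1 : R) ∈ I := by simpa using I.mul_mem_left (↑u⁻¹ : R) _ ha
  exact one_ne_zero (α := R) (by simpa using hI2 1 h1 1 h1)

end TwoSidedIdeal

section Congruence

open TwoSidedIdeal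

variable {R n : Type*} [Ring R] [StarRing R] [Fintype n] [DecidableEq n] {I : TwoSidedIdeal R}
  {J : Matrix n n R}

theorem conjTranspose_one_add_mul_mul_eq_iff_isHermitian (hIstar : ∀ a ∈ I, star a ∈ I)
    (hI2 : ∀ a ∈ I, ∀ b ∈ I, a * b = 0) (hJ : Jᴴ = -J) {Y : Matrix n n R}
    (hY : Y ∈ I.matrix n) : (1 + Y)ᴴ * J * (1 + Y) = J ↔ (J * Y).IsHermitian := by
  have hquad : Yᴴ * J * Y = 0 := by
    rw [Matrix.mul_assoc]
    exact mul_eq_zero_of_mem_matrix hI2 (conjTranspose_mem_matrix hIstar hY)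
      ((I.matrix n).mul_mem_left J Y hY)
  have hexpand : (1 + Y)ᴴ * J * (1 + Y) = J + (J * Y - (J * Y)ᴴ) := by
    rw [conjTranspose_add, conjTranspose_one, conjTranspose_mul, hJ]
    linear_combination (norm := noncomm_ring) hquad
  rw [hexpand, add_eq_left, sub_eq_zero, IsHermitian, eq_comm]

theorem card_unitary_congruence_eq_card_isHermitian (hIstar : ∀ a ∈ I, star a ∈ I)
    (hI2 : ∀ a ∈ I, ∀ b ∈ I, a * b = 0) (hJ2 : J * J = -1) (hJ : Jᴴ = -J) :
    Nat.card {X : Matrix n n R // Xᴴ * J * X = J ∧ ∀ i j, (X - 1) i j ∈ I} =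
      Nat.card {Z : Matrix n n R // Z.IsHermitian ∧ Z ∈ I.matrix n} := by
  let e : Matrix n n R ≃ Matrix n n R :=
    { toFun := fun X => J * (X - 1)
      invFun := fun Z => 1 - J * Z
      left_inv := fun X => by
        simp only [← Matrix.mul_assoc, hJ2]; noncomm_ring
      right_inv := fun Z => by
        simp only [sub_sub_cancel_left, Matrix.mul_neg, ← Matrix.mul_assoc, hJ2]; noncomm_ring }
  refine Nat.card_congr (e.subtypeEquiv fun X => ?_)
  have hmem : X - 1 ∈ I.matrix n ↔ J * (X - 1) ∈ I.matrix n :=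
    ⟨(I.matrix n).mul_mem_left J _, fun h => by
      simpa [← Matrix.mul_assoc, hJ2] using (I.matrix n).mul_mem_left (-J) _ h⟩
  change _ ∧ X - 1 ∈ I.matrix n ↔ (J * (X - 1)).IsHermitian ∧ J * (X - 1) ∈ I.matrix n
  rw [← hmem, and_congr_left_iff]
  intro hX
  simpa using conjTranspose_one_add_mul_mul_eq_iff_isHermitian hIstar hI2 hJ hX

end Congruence

section Hermitian

variable {R n : Type*} [InvolutiveStar R] [LinearOrder n] {S : Type*} [SetLike S R]

namespace Matrix

def ofUpperDiag (u : {p : n × n // p.1 < p.2} → R) (d : n → R) : Matrix n n R :=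
  of fun i j =>
    if h : i < j then u ⟨(i, j), h⟩ else if h : j < i then star (u ⟨(j, i), h⟩) else d i

variable (u : {p : n × n // p.1 < p.2} → R) (d : n → R)

theorem ofUpperDiag_apply_of_lt {i j : n} (h : i < j) : ofUpperDiag u d i j = u ⟨(i, j), h⟩ :=
  dif_pos h

theorem ofUpperDiag_apply_of_gt {i j : n} (h : j < i) :
    ofUpperDiag u d i j = star (u ⟨(j, i), h⟩) :=
  (dif_neg h.not_gt).trans (dif_pos h)

theorem ofUpperDiag_apply_self (i : n) : ofUpperDiag u d i i = d i :=
  (dif_neg (lt_irrefl i)).trans (dif_neg (lt_irrefl i))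

theorem isHermitian_ofUpperDiag (hd : ∀ i, star (d i) = d i) : (ofUpperDiag u d).IsHermitian := by
  ext i j
  rw [conjTranspose_apply]
  rcases lt_trichotomy i j with h | rfl | h
  · rw [ofUpperDiag_apply_of_gt u d h, ofUpperDiag_apply_of_lt u d h, star_star]
  · rw [ofUpperDiag_apply_self, hd]
  · rw [ofUpperDiag_apply_of_lt u d h, ofUpperDiag_apply_of_gt u d h]

theorem IsHermitian.ofUpperDiag_eq {Z : Matrix n n R} (hZ : Z.IsHermitian) :
    ofUpperDiag (fun p => Z p.1.1 p.1.2) (fun i => Z i i) = Z := by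
  ext i j
  rcases lt_trichotomy i j with h | rfl | h
  · rw [ofUpperDiag_apply_of_lt _ _ h]
  · rw [ofUpperDiag_apply_self]
  · rw [ofUpperDiag_apply_of_gt _ _ h, ← hZ.apply i j]

end Matrix

def isHermitianEquivUpperDiag (s : S) (hs : ∀ a ∈ s, star a ∈ s) :
    {Z : Matrix n n R // Z.IsHermitian ∧ ∀ i j, Z i j ∈ s} ≃
      ({p : n × n // p.1 < p.2} → s) × (n → {a // a ∈ s ∧ star a = a}) where
  toFun Z := (fun p => ⟨Z.1 p.1.1 p.1.2, Z.2.2 _ _⟩,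
    fun i => ⟨Z.1 i i, Z.2.2 i i, Z.2.1.apply i i⟩)
  invFun ud := ⟨ofUpperDiag (fun p => ud.1 p) (fun i => ud.2 i),
    isHermitian_ofUpperDiag _ _ fun i => (ud.2 i).2.2, fun i j => by
      rcases lt_trichotomy i j with h | rfl | h
      · simp [ofUpperDiag_apply_of_lt _ _ h]
      · simpa [ofUpperDiag_apply_self] using (ud.2 i).2.1
      · simpa [ofUpperDiag_apply_of_gt _ _ h] using hs _ (ud.1 _).2⟩
  left_inv Z := Subtype.ext Z.2.1.ofUpperDiag_eq
  right_inv ud := by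
    refine Prod.ext (funext fun p => ?_) (funext fun i => ?_)
    · simp [ofUpperDiag_apply_of_lt _ _ p.2]
    · simp [ofUpperDiag_apply_self]

theorem card_subtype_fst_lt_snd [Fintype n] :
    Nat.card {p : n × n // p.1 < p.2} = (Fintype.card n).choose 2 := by
  rw [Nat.card_eq_fintype_card, Fintype.card_subtype, ← Finset.univ_product_univ,
    Finset.card_product_filter_lt, Finset.card_univ]

theorem card_isHermitian_forall_mem [Fintype n] (s : S) (hs : ∀ a ∈ s, star a ∈ s) :
    Nat.card {Z : Matrix n n R // Z.IsHermitian ∧ ∀ i j, Z i j ∈ s} =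
      Nat.card s ^ (Fintype.card n).choose 2 *
        Nat.card {a // a ∈ s ∧ star a = a} ^ Fintype.card n := by
  rw [Nat.card_congr (isHermitianEquivUpperDiag s hs), Nat.card_prod, Nat.card_fun, Nat.card_fun,
    card_subtype_fst_lt_snd, Nat.card_eq_fintype_card (α := n)]

end Hermitian

theorem Nat.choose_two_two_mul (m : ℕ) : (2 * m).choose 2 = 2 * m ^ 2 - m := by
  rw [Nat.choose_two_right, mul_assoc, Nat.mul_div_cancel_left _ two_pos, Nat.mul_sub_one]
  ring_nf

theorem stmt11_general {A : Type*} [Ring A] [StarRing A] [IsLocalRing A]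
    (I : TwoSidedIdeal A) (hIstar : ∀ a ∈ I, star a ∈ I)
    (hI2 : ∀ a ∈ I, ∀ b ∈ I, a * b = 0)
    {m : ℕ} :
    Nat.card {X : Matrix (Fin (2 * m)) (Fin (2 * m)) A //
        Xᴴ * stdSymplectic A m * X = stdSymplectic A m ∧ ∀ i j, (X - 1) i j ∈ I} =
      Nat.card I ^ (2 * m ^ 2 - m) *
        Nat.card {a : A // a ∈ I ∧ a ∈ nonunits A ∧ star a = a} ^ (2 * m) := by
  have hdiag : {a : A // a ∈ I ∧ a ∈ nonunits A ∧ star a = a} ≃ {a : A // a ∈ I ∧ star a = a} :=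
    Equiv.subtypeEquivRight fun a => ⟨fun h => ⟨h.1, h.2.2⟩,
      fun h => ⟨h.1, I.mem_nonunits_of_forall_mul_eq_zero hI2 h.1, h.2⟩⟩
  rw [card_unitary_congruence_eq_card_isHermitian hIstar hI2 (stdSymplectic_mul_self m)
      (conjTranspose_stdSymplectic m)]
  simp_rw [TwoSidedIdeal.mem_matrix]
  rw [card_isHermitian_forall_mem I hIstar, Fintype.card_fin, Nat.choose_two_two_mul,
    Nat.card_congr hdiag]

/-- Let `A` be a finite local ring with involution `*` such that `2` is a unit
and `a - a*` is a non-unit (lies in the Jacobson radical `r` = the set of non-units) for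
every `a`.  Let `I` be a `*`-invariant two-sided ideal with `I² = 0` and `m ≥ 1`.  Then the
kernel of the reduction map `U_{2m}(A) → U_{2m}(A/I)`, i.e. the set of `X` with
`XᴴJ₀X = J₀` and `X ≡ 1` entrywise mod `I`, has cardinality
`|I|^(2m² - m) * |I ∩ 𝔪|^(2m)` where `𝔪 = {a ∈ r : a* = a}`. -/
theorem stmt11 {A : Type*} [Ring A] [StarRing A] [IsLocalRing A] [Finite A]
    (h2 : IsUnit (2 : A)) (hsk : ∀ a : A, a - star a ∈ nonunits A)
    (I : TwoSidedIdeal A) (hIstar : ∀ a ∈ I, star a ∈ I)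
    (hI2 : ∀ a ∈ I, ∀ b ∈ I, a * b = 0)
    {m : ℕ} (hm : 1 ≤ m) :
    Nat.card {X : Matrix (Fin (2 * m)) (Fin (2 * m)) A //
        Xᴴ * stdSymplectic A m * X = stdSymplectic A m ∧ ∀ i j, (X - 1) i j ∈ I} =
      Nat.card I ^ (2 * m ^ 2 - m) *
        Nat.card {a : A // a ∈ I ∧ a ∈ nonunits A ∧ star a = a} ^ (2 * m) :=
  stmt11_general I hIstar hI2
end
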